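/- Along any zero-energy solution c of the Kepler-Heisenberg system (i.e., a solution with H(c(t)) = 0 for all t), the dilational momentum J = x·p_x + y·p_y + 2z·p_z is conserved: t ↦ J(c(t)) is constant on the interval of definition. -/

import Mathlib

/-- `P_X = p_x - (1/2) y p_z`, where phase space coordinates are
`(x, y, z, p_x, p_y, p_z) = (p 0, p 1, p 2, p 3, p 4, p 5)`. -/
noncomputable def PX (p : Fin 6 → ℝ) : ℝ := p 3 - (1/2) * p 1 * p 5

/-- `P_Y = p_y + (1/2) x p_z`. -/
noncomputable def PY (p : Fin 6 → ℝ) : ℝ := p 4 + (1/2) * p 0 * p 5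

/-- `Q = (x² + y²)² + 16 z²`. -/
noncomputable def Qf (p : Fin 6 → ℝ) : ℝ := ((p 0)^2 + (p 1)^2)^2 + 16 * (p 2)^2

/-- The Kepler–Heisenberg Hamiltonian `H = (1/2)(P_X² + P_Y²) - (1/(8π)) Q^{-1/2}`. -/
noncomputable def Ham (p : Fin 6 → ℝ) : ℝ :=
  (1/2) * ((PX p)^2 + (PY p)^2) - (1/(8*Real.pi)) * (Qf p) ^ (-(1/2) : ℝ)

/-- A solution of the Kepler–Heisenberg system: a differentiable curve on an open
interval (open preconnected set) `I`, whose position component never vanishes, and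
which satisfies Hamilton's equations for `Ham`. -/
def IsSolutionOn (c : ℝ → Fin 6 → ℝ) (I : Set ℝ) : Prop :=
  IsOpen I ∧ IsPreconnected I ∧
  ∀ t ∈ I,
    (¬ (c t 0 = 0 ∧ c t 1 = 0 ∧ c t 2 = 0)) ∧
    HasDerivAt (fun τ => c τ 0) (fderiv ℝ Ham (c t) (Pi.single 3 1)) t ∧
    HasDerivAt (fun τ => c τ 1) (fderiv ℝ Ham (c t) (Pi.single 4 1)) t ∧
    HasDerivAt (fun τ => c τ 2) (fderiv ℝ Ham (c t) (Pi.single 5 1)) t ∧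
    HasDerivAt (fun τ => c τ 3) (-(fderiv ℝ Ham (c t) (Pi.single 0 1))) t ∧
    HasDerivAt (fun τ => c τ 4) (-(fderiv ℝ Ham (c t) (Pi.single 1 1))) t ∧
    HasDerivAt (fun τ => c τ 5) (-(fderiv ℝ Ham (c t) (Pi.single 2 1))) t

/-- The dilational momentum `J = x p_x + y p_y + 2 z p_z`. -/
noncomputable def Jmom (p : Fin 6 → ℝ) : ℝ := p 0 * p 3 + p 1 * p 4 + 2 * p 2 * p 5

/-! The Hamiltonian is homogeneous of degree `-2` for the weighted dilations
`(x, y, z, p_x, p_y, p_z) ↦ (eˢx, eˢy, e²ˢz, e⁻ˢp_x, e⁻ˢp_y, e⁻²ˢp_z)`, whose infinitesimal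
generator is the Hamiltonian vector field of `J`. Euler's identity therefore gives
`dJ/dt = {J, H} = 2H` along every solution, which vanishes at zero energy. -/

open Real

section WeightedDilation

variable {ι : Type*}

noncomputable def weightedDilation (w : ι → ℝ) (s : ℝ) (q : ι → ℝ) : ι → ℝ :=
  fun i => exp (w i * s) * q i

theorem hasDerivAt_weightedDilation (w q : ι → ℝ) :
    HasDerivAt (fun s => weightedDilation w s q) (fun i => w i * q i) 0 := by
  rw [hasDerivAt_pi]
  intro i
  simpa [weightedDilation] using (((hasDerivAt_id (0 : ℝ)).const_mul (w i)).exp).mul_const (q i)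

theorem fderiv_apply_weight_eq_of_homogeneous [Fintype ι] {f : (ι → ℝ) → ℝ} {w q : ι → ℝ} {k : ℝ}
    (hf : ∀ s, f (weightedDilation w s q) = exp (k * s) * f q) (hd : DifferentiableAt ℝ f q) :
    fderiv ℝ f q (fun i => w i * q i) = k * f q := by
  have hchain : HasDerivAt (fun s => f (weightedDilation w s q))
      (fderiv ℝ f q (fun i => w i * q i)) 0 := by
    refine hd.hasFDerivAt.comp_hasDerivAt_of_eq 0 (hasDerivAt_weightedDilation w q) ?_
    ext; simp [weightedDilation]
  have hexp : HasDerivAt (fun s => exp (k * s) * f q) (k * f q) 0 := by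
    simpa using (((hasDerivAt_id (0 : ℝ)).const_mul k).exp).mul_const (f q)
  exact hchain.unique (by simpa only [hf] using hexp)

end WeightedDilation

theorem ContinuousLinearMap.apply_eq_sum_mul_single {ι : Type*} [Fintype ι] [DecidableEq ι]
    (L : (ι → ℝ) →L[ℝ] ℝ) (v : ι → ℝ) : L v = ∑ i, v i * L (Pi.single i 1) := by
  conv_lhs => rw [pi_eq_sum_univ' v]
  simp [map_sum]

noncomputable def khWeight : Fin 6 → ℝ := ![1, 1, 2, -1, -1, -2]

theorem Qf_pos {q : Fin 6 → ℝ} (hq : ¬ (q 0 = 0 ∧ q 1 = 0 ∧ q 2 = 0)) : 0 < Qf q := by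
  unfold Qf
  rcases not_and_or.mp hq with h | h
  · positivity
  · rcases not_and_or.mp h with h | h <;> positivity

theorem Ham_weightedDilation (s : ℝ) (q : Fin 6 → ℝ) :
    Ham (weightedDilation khWeight s q) = exp (-2 * s) * Ham q := by
  have hQ : Qf (weightedDilation khWeight s q) = exp (4 * s) * Qf q := by
    simp only [Qf, weightedDilation, khWeight]
    simp only [Matrix.cons_val, one_mul, show (2 : ℝ) * s = s + s by ring,
      show (4 : ℝ) * s = s + s + s + s by ring, exp_add]
    ring
  have hQpow : Qf (weightedDilation khWeight s q) ^ (-(1/2) : ℝ) =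
      exp (-2 * s) * Qf q ^ (-(1/2) : ℝ) := by
    rw [hQ, mul_rpow (exp_pos _).le (by unfold Qf; positivity), ← exp_mul]
    ring_nf
  rw [Ham, Ham, hQpow]
  simp only [PX, PY, weightedDilation, khWeight]
  simp only [Matrix.cons_val, neg_mul, one_mul, exp_neg, show (2 : ℝ) * s = s + s by ring, exp_add]
  field_simp

theorem differentiableAt_Ham {q : Fin 6 → ℝ} (hq : Qf q ≠ 0) : DifferentiableAt ℝ Ham q := by
  have hQ : DifferentiableAt ℝ Qf q := by unfold Qf; fun_prop
  have hQpow := hQ.rpow_const (p := -(1/2)) (Or.inl hq)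
  unfold Ham PX PY
  fun_prop

theorem fderiv_Ham_khWeight {q : Fin 6 → ℝ} (hq : Qf q ≠ 0) :
    fderiv ℝ Ham q (fun i => khWeight i * q i) = -2 * Ham q :=
  fderiv_apply_weight_eq_of_homogeneous (fun s => Ham_weightedDilation s q) (differentiableAt_Ham hq)

theorem hasDerivAt_Jmom_of_isSolutionOn {c : ℝ → Fin 6 → ℝ} {I : Set ℝ} (hc : IsSolutionOn c I)
    {t : ℝ} (ht : t ∈ I) : HasDerivAt (fun τ => Jmom (c τ)) (2 * Ham (c t)) t := by
  obtain ⟨hpos, h0, h1, h2, h3, h4, h5⟩ := hc.2.2 t ht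
  have hJ := ((h0.mul h3).add (h1.mul h4)).add ((h2.const_mul 2).mul h5)
  refine hJ.congr_deriv ?_
  have euler := fderiv_Ham_khWeight (Qf_pos hpos).ne'
  rw [ContinuousLinearMap.apply_eq_sum_mul_single, Fin.sum_univ_six] at euler
  simp [khWeight] at euler
  linear_combination -euler

/-- Along any zero-energy solution of the Kepler–Heisenberg system, the dilational
momentum `J = x p_x + y p_y + 2 z p_z` is conserved. -/
theorem kh_zero_energy_J_conserved (c : ℝ → Fin 6 → ℝ) (I : Set ℝ)
    (hc : IsSolutionOn c I) (hE : ∀ t ∈ I, Ham (c t) = 0) :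
    ∀ t₁ ∈ I, ∀ t₂ ∈ I, Jmom (c t₁) = Jmom (c t₂) := by
  have hJ : ∀ t ∈ I, HasDerivAt (fun τ => Jmom (c τ)) 0 t := fun t ht => by
    simpa [hE t ht] using hasDerivAt_Jmom_of_isSolutionOn hc ht
  intro t₁ ht₁ t₂ ht₂
  exact hc.1.is_const_of_deriv_eq_zero hc.2.1
    (fun t ht => (hJ t ht).differentiableAt.differentiableWithinAt)
    (fun t ht => (hJ t ht).deriv) ht₁ ht₂
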